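/- arXiv:1701.08817 — 10 statements merged into one kernel-verified Lean document; each statement's English description precedes it below -/
import Mathlib

section
/- Let g, h₀, k, T > 0 and ω, c ∈ ℝ satisfy the capillary-gravity dispersion relation (c − (ω/2)·tanh(k h₀)/k)² = (g + T k²)·tanh(k h₀)/k + (ω²/4)·tanh²(k h₀)/k². Define η(x,t) = cos(k(x−ct)), u(x,y,t) = cos(k(x−ct))·c k cosh(k(h₀+y))/sinh(k h₀), v(x,y,t) = sin(k(x−ct))·c k sinh(k(h₀+y))/sinh(k h₀), and p(x,y,t) = cos(k(x−ct))·((c+ωy)·c k cosh(k(h₀+y)) − ω c sinh(k(h₀+y)))/sinh(k h₀). Then for all t, x ∈ ℝ and all y ∈ [−h₀, 0]: ∂ₜu − ωy·∂ₓu − ωv = −∂ₓp, ∂ₜv − ωy·∂ₓv = −∂_y p, ∂ₓu + ∂_y v = 0, ∂ₓv − ∂_y u = 0; moreover v(x,0,t) = ∂ₜη(x,t), p(x,0,t) = g·η(x,t) − T·∂ₓₓη(x,t), and v(x,−h₀,t) = 0. -/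
/-!
All fields are a trigonometric function of the phase `k (x - c t)` times a hyperbolic profile in
the depth, so every derivative stays in this class and the four field equations become identities
between such products; the bottom condition holds since `sinh 0 = 0`. Only the dynamic surface
condition sees the dispersion relation, which after clearing denominators reads
`c² k cosh (k h₀) - ω c sinh (k h₀) = (g + T k²) sinh (k h₀)`.
-/

open Real

namespace CapillaryWave

theorem dispersion_relation_iff {k τ c ω G : ℝ} (hk : k ≠ 0) :
    (c - ω / 2 * τ / k) ^ 2 = G * τ / k + ω ^ 2 / 4 * τ ^ 2 / k ^ 2
      ↔ c ^ 2 * k - ω * c * τ = G * τ := by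
  have hdiff : (c - ω / 2 * τ / k) ^ 2 - (G * τ / k + ω ^ 2 / 4 * τ ^ 2 / k ^ 2)
      = (c ^ 2 * k - ω * c * τ - G * τ) / k := by
    field_simp
    ring
  rw [← sub_eq_zero, hdiff, div_eq_zero_iff, sub_eq_zero, or_iff_left hk]

theorem dispersion_relation_cosh_sinh {k a c ω G : ℝ} (hk : k ≠ 0)
    (h : (c - ω / 2 * tanh a / k) ^ 2 = G * tanh a / k + ω ^ 2 / 4 * tanh a ^ 2 / k ^ 2) :
    c ^ 2 * k * cosh a - ω * c * sinh a = G * sinh a := by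
  have h' := (dispersion_relation_iff hk).1 h
  rw [tanh_eq_sinh_div_cosh] at h'
  field_simp at h'
  linear_combination h'

noncomputable def eta (k c x t : ℝ) : ℝ := cos (k * (x - c * t))

noncomputable def u (h₀ k c x y t : ℝ) : ℝ :=
  cos (k * (x - c * t)) * (c * k * cosh (k * (h₀ + y)) / sinh (k * h₀))

noncomputable def v (h₀ k c x y t : ℝ) : ℝ :=
  sin (k * (x - c * t)) * (c * k * sinh (k * (h₀ + y)) / sinh (k * h₀))

noncomputable def p (h₀ k ω c x y t : ℝ) : ℝ :=
  cos (k * (x - c * t)) *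
    (((c + ω * y) * (c * k) * cosh (k * (h₀ + y)) - ω * c * sinh (k * (h₀ + y))) / sinh (k * h₀))

variable (h₀ k ω c x y t : ℝ)

theorem hasDerivAt_cos_phase_x :
    HasDerivAt (fun x => cos (k * (x - c * t))) (-(k * sin (k * (x - c * t)))) x := by
  simpa [mul_comm] using (((hasDerivAt_id x).sub_const (c * t)).const_mul k).cos

theorem hasDerivAt_sin_phase_x :
    HasDerivAt (fun x => sin (k * (x - c * t))) (k * cos (k * (x - c * t))) x := by
  simpa [mul_comm] using (((hasDerivAt_id x).sub_const (c * t)).const_mul k).sin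

theorem hasDerivAt_cos_phase_t :
    HasDerivAt (fun t => cos (k * (x - c * t))) (k * c * sin (k * (x - c * t))) t := by
  simpa [mul_comm] using ((((hasDerivAt_id t).const_mul c).const_sub x).const_mul k).cos

theorem hasDerivAt_sin_phase_t :
    HasDerivAt (fun t => sin (k * (x - c * t))) (-(k * c * cos (k * (x - c * t)))) t := by
  simpa [mul_comm] using ((((hasDerivAt_id t).const_mul c).const_sub x).const_mul k).sin

theorem hasDerivAt_cosh_depth :
    HasDerivAt (fun y => cosh (k * (h₀ + y))) (k * sinh (k * (h₀ + y))) y := by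
  simpa [mul_comm] using (((hasDerivAt_id y).const_add h₀).const_mul k).cosh

theorem hasDerivAt_sinh_depth :
    HasDerivAt (fun y => sinh (k * (h₀ + y))) (k * cosh (k * (h₀ + y))) y := by
  simpa [mul_comm] using (((hasDerivAt_id y).const_add h₀).const_mul k).sinh

theorem deriv_eta_t : deriv (fun t => eta k c x t) t = k * c * sin (k * (x - c * t)) :=
  (hasDerivAt_cos_phase_t k c x t).deriv

theorem deriv_eta_x : deriv (fun x => eta k c x t) x = -(k * sin (k * (x - c * t))) :=
  (hasDerivAt_cos_phase_x k c x t).deriv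

theorem deriv_eta_xx :
    deriv (fun x => deriv (fun x => eta k c x t) x) x = -(k ^ 2 * eta k c x t) := by
  simp only [deriv_eta_x]
  rw [deriv.fun_neg, ((hasDerivAt_sin_phase_x k c x t).const_mul k).deriv, eta]
  ring

theorem deriv_u_t : deriv (fun t => u h₀ k c x y t) t
    = k * c * sin (k * (x - c * t)) * (c * k * cosh (k * (h₀ + y)) / sinh (k * h₀)) :=
  ((hasDerivAt_cos_phase_t k c x t).mul_const _).deriv

theorem deriv_u_x : deriv (fun x => u h₀ k c x y t) x
    = -(k * sin (k * (x - c * t))) * (c * k * cosh (k * (h₀ + y)) / sinh (k * h₀)) :=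
  ((hasDerivAt_cos_phase_x k c x t).mul_const _).deriv

theorem deriv_u_y : deriv (fun y => u h₀ k c x y t) y
    = cos (k * (x - c * t)) * (c * k * (k * sinh (k * (h₀ + y))) / sinh (k * h₀)) :=
  ((((hasDerivAt_cosh_depth h₀ k y).const_mul (c * k)).div_const _).const_mul _).deriv

theorem deriv_v_t : deriv (fun t => v h₀ k c x y t) t
    = -(k * c * cos (k * (x - c * t))) * (c * k * sinh (k * (h₀ + y)) / sinh (k * h₀)) :=
  ((hasDerivAt_sin_phase_t k c x t).mul_const _).deriv

theorem deriv_v_x : deriv (fun x => v h₀ k c x y t) x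
    = k * cos (k * (x - c * t)) * (c * k * sinh (k * (h₀ + y)) / sinh (k * h₀)) :=
  ((hasDerivAt_sin_phase_x k c x t).mul_const _).deriv

theorem deriv_v_y : deriv (fun y => v h₀ k c x y t) y
    = sin (k * (x - c * t)) * (c * k * (k * cosh (k * (h₀ + y))) / sinh (k * h₀)) :=
  ((((hasDerivAt_sinh_depth h₀ k y).const_mul (c * k)).div_const _).const_mul _).deriv

theorem deriv_p_x : deriv (fun x => p h₀ k ω c x y t) x
    = -(k * sin (k * (x - c * t))) *
      (((c + ω * y) * (c * k) * cosh (k * (h₀ + y)) - ω * c * sinh (k * (h₀ + y)))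
        / sinh (k * h₀)) :=
  ((hasDerivAt_cos_phase_x k c x t).mul_const _).deriv

theorem deriv_p_y : deriv (fun y => p h₀ k ω c x y t) y
    = cos (k * (x - c * t)) *
      ((ω * (c * k) * cosh (k * (h₀ + y)) + (c + ω * y) * (c * k) * (k * sinh (k * (h₀ + y)))
        - ω * c * (k * cosh (k * (h₀ + y)))) / sinh (k * h₀)) := by
  have hlin : HasDerivAt (fun y => (c + ω * y) * (c * k)) (ω * (c * k)) y := by
    simpa using (((hasDerivAt_id y).const_mul ω).const_add c).mul_const (c * k)
  exact (((hlin.mul (hasDerivAt_cosh_depth h₀ k y)).sub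
    ((hasDerivAt_sinh_depth h₀ k y).const_mul (ω * c))).div_const _).const_mul _ |>.deriv

theorem euler_x : deriv (fun t => u h₀ k c x y t) t - ω * y * deriv (fun x => u h₀ k c x y t) x
    - ω * v h₀ k c x y t = -deriv (fun x => p h₀ k ω c x y t) x := by
  rw [deriv_u_t, deriv_u_x, deriv_p_x, v]
  ring

theorem euler_y : deriv (fun t => v h₀ k c x y t) t - ω * y * deriv (fun x => v h₀ k c x y t) x
    = -deriv (fun y => p h₀ k ω c x y t) y := by
  rw [deriv_v_t, deriv_v_x, deriv_p_y]
  ring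

theorem divergence_eq_zero :
    deriv (fun x => u h₀ k c x y t) x + deriv (fun y => v h₀ k c x y t) y = 0 := by
  rw [deriv_u_x, deriv_v_y]
  ring

theorem curl_eq_zero :
    deriv (fun x => v h₀ k c x y t) x - deriv (fun y => u h₀ k c x y t) y = 0 := by
  rw [deriv_v_x, deriv_u_y]
  ring

theorem bottom_condition : v h₀ k c x (-h₀) t = 0 := by
  simp [v]

theorem kinematic_condition (hs : sinh (k * h₀) ≠ 0) :
    v h₀ k c x 0 t = deriv (fun t => eta k c x t) t := by
  rw [deriv_eta_t, v, add_zero]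
  field_simp

theorem dynamic_condition (g T : ℝ) (hs : sinh (k * h₀) ≠ 0)
    (hdisp : c ^ 2 * k * cosh (k * h₀) - ω * c * sinh (k * h₀) = (g + T * k ^ 2) * sinh (k * h₀)) :
    p h₀ k ω c x 0 t = g * eta k c x t - T * deriv (fun x => deriv (fun x => eta k c x t) x) x := by
  rw [deriv_eta_xx, p, eta, add_zero, mul_zero, add_zero]
  field_simp
  linear_combination cos (k * (x - c * t)) * hdisp

end CapillaryWave

open CapillaryWave in
theorem linearized_capillary_water_waves_constant_vorticity_general
    (g h₀ k T ω c : ℝ) (hh₀ : 0 < h₀) (hk : 0 < k)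
    (hdisp : (c - ω / 2 * tanh (k * h₀) / k) ^ 2
      = (g + T * k ^ 2) * tanh (k * h₀) / k + ω ^ 2 / 4 * tanh (k * h₀) ^ 2 / k ^ 2)
    (η : ℝ → ℝ → ℝ) (u v p : ℝ → ℝ → ℝ → ℝ)
    (hη : ∀ x t, η x t = cos (k * (x - c * t)))
    (hu : ∀ x y t, u x y t
      = cos (k * (x - c * t)) * (c * k * cosh (k * (h₀ + y)) / sinh (k * h₀)))
    (hv : ∀ x y t, v x y t
      = sin (k * (x - c * t)) * (c * k * sinh (k * (h₀ + y)) / sinh (k * h₀)))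
    (hp : ∀ x y t, p x y t
      = cos (k * (x - c * t)) *
        (((c + ω * y) * (c * k) * cosh (k * (h₀ + y)) - ω * c * sinh (k * (h₀ + y)))
          / sinh (k * h₀))) :
    ∀ t x : ℝ, ∀ y ∈ Set.Icc (-h₀) (0 : ℝ),
      (deriv (fun t' => u x y t') t - ω * y * deriv (fun x' => u x' y t) x - ω * v x y t
        = -deriv (fun x' => p x' y t) x) ∧
      (deriv (fun t' => v x y t') t - ω * y * deriv (fun x' => v x' y t) x
        = -deriv (fun y' => p x y' t) y) ∧
      (deriv (fun x' => u x' y t) x + deriv (fun y' => v x y' t) y = 0) ∧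
      (deriv (fun x' => v x' y t) x - deriv (fun y' => u x y' t) y = 0) ∧
      (v x 0 t = deriv (fun t' => η x t') t) ∧
      (p x 0 t = g * η x t - T * deriv (fun x' => deriv (fun x'' => η x'' t) x') x) ∧
      (v x (-h₀) t = 0) := by
  obtain rfl : η = eta k c := funext₂ hη
  obtain rfl : u = CapillaryWave.u h₀ k c := funext₃ hu
  obtain rfl : v = CapillaryWave.v h₀ k c := funext₃ hv
  obtain rfl : p = CapillaryWave.p h₀ k ω c := funext₃ hp
  have hs : sinh (k * h₀) ≠ 0 := (sinh_pos_iff.2 (mul_pos hk hh₀)).ne'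
  have hdisp_cosh := dispersion_relation_cosh_sinh hk.ne' hdisp
  intro t x y _
  exact ⟨euler_x .., euler_y .., divergence_eq_zero .., curl_eq_zero ..,
    kinematic_condition h₀ k c x t hs, dynamic_condition h₀ k ω c x t g T hs hdisp_cosh,
    bottom_condition ..⟩

/-- The explicit sinusoidal ansatz solves the capillary-gravity water wave problem
linearized about the shear flow with constant vorticity `ω` over a channel of depth
`h₀`, with coefficient of surface tension `T`. -/
theorem linearized_capillary_water_waves_constant_vorticity
    (g h₀ k T ω c : ℝ) (hg : 0 < g) (hh₀ : 0 < h₀) (hk : 0 < k) (hT : 0 < T)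
    (hdisp : (c - ω / 2 * tanh (k * h₀) / k) ^ 2
      = (g + T * k ^ 2) * tanh (k * h₀) / k + ω ^ 2 / 4 * tanh (k * h₀) ^ 2 / k ^ 2)
    (η : ℝ → ℝ → ℝ) (u v p : ℝ → ℝ → ℝ → ℝ)
    (hη : ∀ x t, η x t = cos (k * (x - c * t)))
    (hu : ∀ x y t, u x y t
      = cos (k * (x - c * t)) * (c * k * cosh (k * (h₀ + y)) / sinh (k * h₀)))
    (hv : ∀ x y t, v x y t
      = sin (k * (x - c * t)) * (c * k * sinh (k * (h₀ + y)) / sinh (k * h₀)))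
    (hp : ∀ x y t, p x y t
      = cos (k * (x - c * t)) *
        (((c + ω * y) * (c * k) * cosh (k * (h₀ + y)) - ω * c * sinh (k * (h₀ + y)))
          / sinh (k * h₀))) :
    ∀ t x : ℝ, ∀ y ∈ Set.Icc (-h₀) (0 : ℝ),
      (deriv (fun t' => u x y t') t - ω * y * deriv (fun x' => u x' y t) x - ω * v x y t
        = -deriv (fun x' => p x' y t) x) ∧
      (deriv (fun t' => v x y t') t - ω * y * deriv (fun x' => v x' y t) x
        = -deriv (fun y' => p x y' t) y) ∧
      (deriv (fun x' => u x' y t) x + deriv (fun y' => v x y' t) y = 0) ∧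
      (deriv (fun x' => v x' y t) x - deriv (fun y' => u x y' t) y = 0) ∧
      (v x 0 t = deriv (fun t' => η x t') t) ∧
      (p x 0 t = g * η x t - T * deriv (fun x' => deriv (fun x'' => η x'' t) x') x) ∧
      (v x (-h₀) t = 0) :=
  linearized_capillary_water_waves_constant_vorticity_general g h₀ k T ω c hh₀ hk hdisp η u v p hη
    hu hv hp
end

section
/- Let g, h₀, k > 0 and ω > 0, and let c₊ = (ω/2)·tanh(k h₀)/k + √(g·tanh(k h₀)/k + (ω²/4)·tanh²(k h₀)/k²). Then there exists y ∈ (−h₀, 0) with c₊ = −ωy if and only if ω² > g·tanh(k h₀)/(k h₀² − h₀·tanh(k h₀)). (Note k h₀² − h₀·tanh(k h₀) > 0 since tanh x < x for x > 0.) -/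
open Real

lemma tanh_pos_of_pos {x : ℝ} (hx : 0 < x) : 0 < Real.tanh x := by
  rw [Real.tanh_eq_sinh_div_cosh]
  exact div_pos (Real.sinh_pos_iff.mpr hx) (Real.cosh_pos x)

lemma tanh_lt_self_of_pos {x : ℝ} (hx : 0 < x) : Real.tanh x < x := by
  rw [Real.tanh_eq_sinh_div_cosh, div_lt_iff₀ (Real.cosh_pos x)]
  -- show sinh x < x * cosh x
  have h : StrictMonoOn (fun t : ℝ => t * Real.cosh t - Real.sinh t) (Set.Ici 0) := by
    apply strictMonoOn_of_deriv_pos (convex_Ici 0)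
    · fun_prop
    · intro t ht
      rw [interior_Ici, Set.mem_Ioi] at ht
      have : HasDerivAt (fun t : ℝ => t * Real.cosh t - Real.sinh t)
          (1 * Real.cosh t + t * Real.sinh t - Real.cosh t) t := by
        exact ((hasDerivAt_id t).mul (Real.hasDerivAt_cosh t)).sub (Real.hasDerivAt_sinh t)
      rw [this.deriv]
      have := Real.sinh_pos_iff.mpr ht
      nlinarith
  have := h (Set.self_mem_Ici) (Set.mem_Ici.mpr hx.le) hx
  simpa using this

/-- A critical layer (`c₊ = -ωy` for some `y ∈ (-h₀,0)`) occurs for the linear wave over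
a shear flow with constant vorticity `ω > 0` in a channel of depth `h₀` if and only if
`ω² > g·tanh(k h₀)/(k h₀² - h₀·tanh(k h₀))`. -/
theorem critical_layer_iff
    (g h₀ k ω : ℝ) (hg : 0 < g) (hh₀ : 0 < h₀) (hk : 0 < k) (hω : 0 < ω)
    (c : ℝ)
    (hc : c = ω / 2 * (tanh (k * h₀) / k)
      + Real.sqrt (g * tanh (k * h₀) / k + ω ^ 2 / 4 * tanh (k * h₀) ^ 2 / k ^ 2)) :
    (∃ y ∈ Set.Ioo (-h₀) (0 : ℝ), c = -ω * y) ↔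
      ω ^ 2 > g * tanh (k * h₀) / (k * h₀ ^ 2 - h₀ * tanh (k * h₀)) := by
  set T := Real.tanh (k * h₀) with hT
  have hkh : 0 < k * h₀ := mul_pos hk hh₀
  have hT0 : 0 < T := tanh_pos_of_pos hkh
  have hTlt : T < k * h₀ := tanh_lt_self_of_pos hkh
  have hD : 0 < k * h₀ ^ 2 - h₀ * T := by nlinarith
  -- c > 0
  have hA : 0 ≤ g * T / k + ω ^ 2 / 4 * T ^ 2 / k ^ 2 := by positivity
  have hterm : 0 < ω / 2 * (T / k) := by positivity
  have hc0 : 0 < c := by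
    have := Real.sqrt_nonneg (g * T / k + ω ^ 2 / 4 * T ^ 2 / k ^ 2)
    rw [hc]; linarith
  -- B > 0
  have hB : 0 < ω * h₀ - ω / 2 * (T / k) := by
    have : T / k < h₀ := by rw [div_lt_iff₀ hk]; linarith
    nlinarith
  have key : c < ω * h₀ ↔ g * T / (k * h₀ ^ 2 - h₀ * T) < ω ^ 2 := by
    rw [hc]
    have step1 : ω / 2 * (T / k) + Real.sqrt (g * T / k + ω ^ 2 / 4 * T ^ 2 / k ^ 2) < ω * h₀
        ↔ Real.sqrt (g * T / k + ω ^ 2 / 4 * T ^ 2 / k ^ 2) < ω * h₀ - ω / 2 * (T / k) := by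
      constructor <;> intro h <;> linarith
    rw [step1, Real.sqrt_lt' hB]
    have e1 : g * T / k + ω ^ 2 / 4 * T ^ 2 / k ^ 2
        = (4 * g * T * k + ω ^ 2 * T ^ 2) / (4 * k ^ 2) := by
      field_simp
    have e2 : (ω * h₀ - ω / 2 * (T / k)) ^ 2
        = (4 * ω ^ 2 * h₀ ^ 2 * k ^ 2 - 4 * ω ^ 2 * h₀ * k * T + ω ^ 2 * T ^ 2)
          / (4 * k ^ 2) := by
      field_simp; ring
    rw [e1, e2, div_lt_div_iff_of_pos_right (by positivity : (0:ℝ) < 4 * k ^ 2),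
      div_lt_iff₀ hD]
    constructor <;> intro h <;> nlinarith
  constructor
  · rintro ⟨y, ⟨hy1, hy2⟩, hcy⟩
    have : c < ω * h₀ := by rw [hcy]; nlinarith
    exact key.mp this
  · intro h
    have hclt : c < ω * h₀ := key.mpr h
    refine ⟨-c / ω, ⟨?_, ?_⟩, ?_⟩
    · rw [neg_div, neg_lt_neg_iff, div_lt_iff₀ hω]; linarith
    · rw [neg_div, neg_lt, neg_zero]; positivity
    · field_simp
end

section
/- Fix g, h₀ > 0 and ω ∈ ℝ, let c₀ = (ω h₀)/2 + √(g h₀ + (ω² h₀²)/4), and let c₊(k) = (ω/2)·tanh(k h₀)/k + √(g·tanh(k h₀)/k + (ω²/4)·tanh²(k h₀)/k²) for k > 0. Then lim_{k→0⁺} (c₀ − c₊(k))/k² = c₂, where c₂ = (h₀²/6)·(ω h₀ + (g h₀ + (ω² h₀²)/2)/√(g h₀ + (ω² h₀²)/4)). That is, the dispersion relation admits the long wave expansion c₊(k) = c₀ − c₂ k² + o(k²) as k → 0⁺, giving the coefficients of the vorticity-modified Korteweg–de Vries equation. -/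
open Real Filter Topology

/-! Write `c₊(k) = F(T(k))` with `F(T) = ωT/2 + √(gT + ω²T²/4)` and `T(k) = tanh(k h₀)/k`, so
that `c₀ = F(h₀)`. Since `x - tanh x ~ x³/3` (l'Hôpital), `h₀ - T(k) ~ h₀³k²/3`, and factoring
`F(h₀) - F(T) = dslope F h₀ T · (h₀ - T)` yields the limit `F'(h₀) · h₀³/3 = c₂`. -/

theorem Real.hasDerivAt_tanh (x : ℝ) : HasDerivAt tanh (1 - tanh x ^ 2) x := by
  have h := (hasDerivAt_sinh x).div (hasDerivAt_cosh x) (cosh_pos x).ne'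
  rw [show sinh / cosh = tanh from funext fun y => (tanh_eq_sinh_div_cosh y).symm] at h
  refine h.congr_deriv ?_
  rw [tanh_eq_sinh_div_cosh]
  field_simp

theorem Real.tendsto_tanh_div_self : Tendsto (fun x => tanh x / x) (𝓝[≠] 0) (𝓝 1) := by
  have h := (hasDerivAt_tanh 0).tendsto_slope_zero
  simp only [tanh_zero, zero_add, sub_zero, ne_eq, OfNat.ofNat_ne_zero, not_false_eq_true,
    zero_pow, smul_eq_mul] at h
  simpa only [div_eq_inv_mul] using h

theorem Real.tendsto_sub_tanh_div_pow_three :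
    Tendsto (fun x => (x - tanh x) / x ^ 3) (𝓝[≠] 0) (𝓝 (1 / 3)) := by
  have hcont : Continuous fun x => x - tanh x :=
    continuous_id.sub (continuous_iff_continuousAt.2 fun x => (hasDerivAt_tanh x).continuousAt)
  refine HasDerivAt.lhopital_zero_nhdsNE (f' := fun x => tanh x ^ 2) (g' := fun x => 3 * x ^ 2)
    (.of_forall fun x => ((hasDerivAt_id x).sub (hasDerivAt_tanh x)).congr_deriv (by simp))
    (.of_forall fun x => by simpa using hasDerivAt_pow 3 x) ?_ ?_ ?_ ?_
  · filter_upwards [self_mem_nhdsWithin] with x hx using by simpa using hx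
  · exact (hcont.tendsto' 0 0 (by simp)).mono_left nhdsWithin_le_nhds
  · exact ((continuous_pow 3).tendsto' 0 0 (by simp)).mono_left nhdsWithin_le_nhds
  · have h := (tendsto_tanh_div_self.pow 2).div_const 3
    simp only [one_pow] at h
    refine h.congr fun x => ?_
    ring

theorem Real.tendsto_sub_tanh_mul_div_sq (h : ℝ) :
    Tendsto (fun k => (h - tanh (k * h) / k) / k ^ 2) (𝓝[≠] 0) (𝓝 (h ^ 3 / 3)) := by
  rcases eq_or_ne h 0 with rfl | hh
  · simp
  have hscale : Tendsto (fun k => k * h) (𝓝[≠] 0) (𝓝[≠] 0) :=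
    tendsto_nhdsWithin_of_tendsto_nhds_of_eventually_within _
      (((continuous_mul_const h).tendsto' 0 0 (zero_mul h)).mono_left nhdsWithin_le_nhds)
      (by filter_upwards [self_mem_nhdsWithin] with k hk using mul_ne_zero hk hh)
  have := (tendsto_sub_tanh_div_pow_three.comp hscale).const_mul (h ^ 3)
  rw [mul_one_div] at this
  refine this.congr' ?_
  filter_upwards [self_mem_nhdsWithin] with k (hk : k ≠ 0)
  simp only [Function.comp_apply]
  field_simp

theorem Real.tendsto_tanh_mul_div (h : ℝ) :
    Tendsto (fun k => tanh (k * h) / k) (𝓝[≠] 0) (𝓝 h) := by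
  have hsq : Tendsto (fun k : ℝ => k ^ 2) (𝓝[≠] 0) (𝓝 0) :=
    ((continuous_pow 2).tendsto' 0 0 (by simp)).mono_left nhdsWithin_le_nhds
  have := tendsto_const_nhds (x := h).sub (hsq.mul (tendsto_sub_tanh_mul_div_sq h))
  rw [zero_mul, sub_zero] at this
  refine this.congr' ?_
  filter_upwards [self_mem_nhdsWithin] with k (hk : k ≠ 0)
  field_simp
  ring

theorem HasDerivAt.tendsto_sub_comp_div {𝕜 α : Type*} [NontriviallyNormedField 𝕜]
    {f : 𝕜 → 𝕜} {f' a L : 𝕜} {u v : α → 𝕜} {l : Filter α} (hf : HasDerivAt f f' a)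
    (hu : Tendsto u l (𝓝 a)) (huv : Tendsto (fun x => (a - u x) / v x) l (𝓝 L)) :
    Tendsto (fun x => (f a - f (u x)) / v x) l (𝓝 (f' * L)) := by
  have hslope : Tendsto (fun x => dslope f a (u x)) l (𝓝 f') := by
    rw [← hf.deriv, ← dslope_same]
    exact (continuousAt_dslope_same.2 hf.differentiableAt).tendsto.comp hu
  refine (hslope.mul huv).congr fun x => ?_
  rw [← neg_sub (f (u x)), ← sub_smul_dslope, smul_eq_mul]
  ring

noncomputable def phaseSpeed (g ω T : ℝ) : ℝ := ω / 2 * T + √(g * T + ω ^ 2 * T ^ 2 / 4)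

theorem hasDerivAt_phaseSpeed {g ω T : ℝ} (hT : 0 < g * T + ω ^ 2 * T ^ 2 / 4) :
    HasDerivAt (phaseSpeed g ω) (ω / 2 + (g + ω ^ 2 * T / 2) / (2 * √(g * T + ω ^ 2 * T ^ 2 / 4)))
      T := by
  have harg : HasDerivAt (fun T => g * T + ω ^ 2 * T ^ 2 / 4) (g + ω ^ 2 * T / 2) T := by
    refine (((hasDerivAt_id' T).const_mul g).add
      (((hasDerivAt_pow 2 T).const_mul (ω ^ 2)).div_const 4)).congr_deriv ?_
    push_cast
    ring
  exact ((hasDerivAt_id T).const_mul (ω / 2)).add (harg.sqrt hT.ne') |>.congr_deriv (by simp)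

/-- The long wave expansion `c₊(k) = c₀ - c₂k² + o(k²)` of the water wave dispersion
relation with constant vorticity `ω`, giving the coefficients of the vorticity-modified
Korteweg-de Vries equation: `lim_{k→0⁺} (c₀ - c₊(k))/k² = c₂`. -/
theorem phase_speed_KdV_expansion
    (g h₀ ω : ℝ) (hg : 0 < g) (hh₀ : 0 < h₀)
    (c₀ c₂ : ℝ)
    (hc₀ : c₀ = ω * h₀ / 2 + Real.sqrt (g * h₀ + ω ^ 2 * h₀ ^ 2 / 4))
    (hc₂ : c₂ = h₀ ^ 2 / 6 *
      (ω * h₀ + (g * h₀ + ω ^ 2 * h₀ ^ 2 / 2) / Real.sqrt (g * h₀ + ω ^ 2 * h₀ ^ 2 / 4))) :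
    Tendsto
      (fun k : ℝ => (c₀ - (ω / 2 * (tanh (k * h₀) / k)
        + Real.sqrt (g * tanh (k * h₀) / k + ω ^ 2 / 4 * tanh (k * h₀) ^ 2 / k ^ 2))) / k ^ 2)
      (𝓝[>] 0) (𝓝 c₂) := by
  have hA : 0 < g * h₀ + ω ^ 2 * h₀ ^ 2 / 4 := by positivity
  have hquot := tendsto_sub_tanh_mul_div_sq h₀
  have hT := tendsto_tanh_mul_div h₀
  have key := ((hasDerivAt_phaseSpeed hA).tendsto_sub_comp_div hT hquot).mono_left
    (nhdsGT_le_nhdsNE 0)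
  convert key using 2 with k
  · simp only [hc₀, phaseSpeed]
    ring_nf
  · rw [hc₂]
    field_simp
    ring
end

section
/- For every g, h₀ > 0 and every ω ∈ ℝ, one has ω h₀ + (g h₀ + (ω² h₀²)/2)/√(g h₀ + (ω² h₀²)/4) > 0. Consequently the dispersion coefficient c₂ = (h₀²/6)·(ω h₀ + (g h₀ + (ω² h₀²)/2)/√(g h₀ + (ω² h₀²)/4)) of the vorticity-modified Korteweg–de Vries equation is strictly positive for every constant vorticity ω. -/
open Real

/-- The dispersion coefficient `c₂` of the vorticity-modified Korteweg-de Vries equation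
is strictly positive for every constant vorticity `ω`. -/
theorem KdV_dispersion_coefficient_pos
    (g h₀ ω : ℝ) (hg : 0 < g) (hh₀ : 0 < h₀) :
    ω * h₀ + (g * h₀ + ω ^ 2 * h₀ ^ 2 / 2) / Real.sqrt (g * h₀ + ω ^ 2 * h₀ ^ 2 / 4) > 0 ∧
    h₀ ^ 2 / 6 *
      (ω * h₀ + (g * h₀ + ω ^ 2 * h₀ ^ 2 / 2) / Real.sqrt (g * h₀ + ω ^ 2 * h₀ ^ 2 / 4))
      > 0 := by
  have hD : 0 < g * h₀ + ω ^ 2 * h₀ ^ 2 / 4 := by positivity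
  set s := Real.sqrt (g * h₀ + ω ^ 2 * h₀ ^ 2 / 4) with hs
  have hspos : 0 < s := Real.sqrt_pos.mpr hD
  have hssq : s ^ 2 = g * h₀ + ω ^ 2 * h₀ ^ 2 / 4 := Real.sq_sqrt hD.le
  have hA : 0 < g * h₀ + ω ^ 2 * h₀ ^ 2 / 2 := by positivity
  have key : -(ω * h₀) * s < g * h₀ + ω ^ 2 * h₀ ^ 2 / 2 := by
    rcases le_or_gt ω 0 with hω | hω
    · have h1 : 0 ≤ -(ω * h₀) * s := by
        apply mul_nonneg _ hspos.le
        nlinarith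
      have h2 : (-(ω * h₀) * s) ^ 2 < (g * h₀ + ω ^ 2 * h₀ ^ 2 / 2) ^ 2 := by
        have : (-(ω * h₀) * s) ^ 2 = ω ^ 2 * h₀ ^ 2 * s ^ 2 := by ring
        rw [this, hssq]; nlinarith [mul_pos (mul_pos hg hh₀) (mul_pos hg hh₀)]
      nlinarith
    · have : 0 < ω * h₀ * s := by positivity
      nlinarith
  have hmain : ω * h₀ + (g * h₀ + ω ^ 2 * h₀ ^ 2 / 2) / s > 0 := by
    have heq : ω * h₀ + (g * h₀ + ω ^ 2 * h₀ ^ 2 / 2) / s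
        = (ω * h₀ * s + (g * h₀ + ω ^ 2 * h₀ ^ 2 / 2)) / s := by
      field_simp
    rw [heq]
    apply div_pos _ hspos
    linarith
  exact ⟨hmain, by positivity⟩
end

section
/- Let g, h₀ > 0, ω ≠ 0, and for h > 0 set S(h) = √(g h + ω²h²/4) and R±(h,u) = u − ωh/2 ± (S(h) + (g/ω)·log(2g + ω²h + 2ω S(h))). Then for every h > 0 and u ∈ ℝ, the gradient (∂R±/∂h, ∂R±/∂u) = (−ω/2 ± S(h)/h, 1) is a left eigenvector of the matrix A(h,u) = [[u + ωh₀ − ωh, h], [g, u + ωh₀]] with eigenvalue λ± = u + ωh₀ − ωh/2 ± S(h); that is, (∂R±/∂h)·(u + ωh₀ − ωh) + (∂R±/∂u)·g = λ±·(∂R±/∂h) and (∂R±/∂h)·h + (∂R±/∂u)·(u + ωh₀) = λ±·(∂R±/∂u). Hence R± are the Riemann invariants of the vorticity-modified shallow water equations. -/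
open Real

/-!
With `P(h) = g h + ω²h²/4`, `S = √P` and `E = 2g + ω²h + 2ωS`, one has `E' = ωE/(2S)`, so
`(S + (g/ω) log E)' = (2g + ω²h/2)/(2S) = P/(hS) = S/h`. The eigenvector identities are then
polynomial consequences of `S² = P`, and they hold for `-S` as well, which covers `R₋`.
-/

section RiemannInvariant

variable {g ω h : ℝ}

lemma depth_poly_pos (hg : 0 < g) (hh : 0 < h) : 0 < g * h + ω ^ 2 * h ^ 2 / 4 := by
  positivity

/-- `E₊ E₋ = 4g²` with `E₊ + E₋ = 2(2g + ω²h) > 0`, so both factors are positive. -/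
lemma log_arg_pos (hg : 0 < g) (hh : 0 < h) :
    0 < 2 * g + ω ^ 2 * h + 2 * ω * √(g * h + ω ^ 2 * h ^ 2 / 4) := by
  have hsq := sq_sqrt (depth_poly_pos (ω := ω) hg hh).le
  set s := √(g * h + ω ^ 2 * h ^ 2 / 4)
  have hprod : (2 * g + ω ^ 2 * h + 2 * ω * s) * (2 * g + ω ^ 2 * h - 2 * ω * s) = 4 * g ^ 2 := by
    linear_combination (-4 * ω ^ 2) * hsq
  have hsum : 0 < (2 * g + ω ^ 2 * h + 2 * ω * s) + (2 * g + ω ^ 2 * h - 2 * ω * s) := by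
    nlinarith [sq_nonneg ω, mul_nonneg (sq_nonneg ω) hh.le]
  by_contra! hneg
  nlinarith [mul_nonpos_of_nonpos_of_nonneg hneg (by linarith : 0 ≤ 2 * g + ω ^ 2 * h - 2 * ω * s)]

lemma hasDerivAt_sqrt_depth_poly (hg : 0 < g) (hh : 0 < h) :
    HasDerivAt (fun h' => √(g * h' + ω ^ 2 * h' ^ 2 / 4))
      ((g + ω ^ 2 * h / 2) / (2 * √(g * h + ω ^ 2 * h ^ 2 / 4))) h := by
  have hpoly : HasDerivAt (fun h' => g * h' + ω ^ 2 * h' ^ 2 / 4) (g + ω ^ 2 * h / 2) h :=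
    (((hasDerivAt_id h).const_mul g).add
      (((hasDerivAt_pow 2 h).const_mul (ω ^ 2)).div_const 4)).congr_deriv (by simp; ring)
  exact hpoly.sqrt (depth_poly_pos hg hh).ne'

lemma hasDerivAt_log_arg (hg : 0 < g) (hh : 0 < h) :
    HasDerivAt (fun h' => log (2 * g + ω ^ 2 * h' + 2 * ω * √(g * h' + ω ^ 2 * h' ^ 2 / 4)))
      (ω / (2 * √(g * h + ω ^ 2 * h ^ 2 / 4))) h := by
  have hs : 0 < √(g * h + ω ^ 2 * h ^ 2 / 4) := sqrt_pos.2 (depth_poly_pos hg hh)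
  have hE := log_arg_pos (ω := ω) hg hh
  have harg : HasDerivAt (fun h' => 2 * g + ω ^ 2 * h' + 2 * ω * √(g * h' + ω ^ 2 * h' ^ 2 / 4))
      (ω ^ 2 + 2 * ω * ((g + ω ^ 2 * h / 2) / (2 * √(g * h + ω ^ 2 * h ^ 2 / 4)))) h :=
    ((((hasDerivAt_id h).const_mul (ω ^ 2)).const_add (2 * g)).add
      ((hasDerivAt_sqrt_depth_poly hg hh).const_mul (2 * ω))).congr_deriv (by simp)
  refine (harg.log hE.ne').congr_deriv ?_
  generalize √(g * h + ω ^ 2 * h ^ 2 / 4) = s at hs hE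
  rw [div_eq_iff hE.ne']
  field_simp
  ring

/-- The common `h`-dependent part `S + (g/ω) log E` of `R₊` and `-R₋` has derivative `S/h`. -/
lemma hasDerivAt_riemann_potential (hg : 0 < g) (hω : ω ≠ 0) (hh : 0 < h) :
    HasDerivAt
      (fun h' => √(g * h' + ω ^ 2 * h' ^ 2 / 4)
        + g / ω * log (2 * g + ω ^ 2 * h' + 2 * ω * √(g * h' + ω ^ 2 * h' ^ 2 / 4)))
      (√(g * h + ω ^ 2 * h ^ 2 / 4) / h) h := by
  have hsq := sq_sqrt (depth_poly_pos (ω := ω) hg hh).le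
  have hs : 0 < √(g * h + ω ^ 2 * h ^ 2 / 4) := sqrt_pos.2 (depth_poly_pos hg hh)
  refine ((hasDerivAt_sqrt_depth_poly hg hh).add
    ((hasDerivAt_log_arg hg hh).const_mul (g / ω))).congr_deriv ?_
  generalize √(g * h + ω ^ 2 * h ^ 2 / 4) = s at hs hsq
  field_simp
  linear_combination (-4) * hsq

end RiemannInvariant

lemma shallowWater_left_eigenvector {g ω h₀ h s : ℝ} (u : ℝ) (hh : h ≠ 0)
    (hs : s ^ 2 = g * h + ω ^ 2 * h ^ 2 / 4) :
    (-ω / 2 + s / h) * (u + ω * h₀ - ω * h) + 1 * g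
        = (u + ω * h₀ - ω * h / 2 + s) * (-ω / 2 + s / h) ∧
      (-ω / 2 + s / h) * h + 1 * (u + ω * h₀) = (u + ω * h₀ - ω * h / 2 + s) * 1 := by
  constructor
  · field_simp
    linear_combination (-4) * hs
  · field_simp
    ring

/-- The gradients of `R± = u - ωh/2 ± (S(h) + (g/ω)log(2g + ω²h + 2ωS(h)))`,
`S(h) = √(gh + ω²h²/4)`, equal `(-ω/2 ± S(h)/h, 1)` and are left eigenvectors of the
coefficient matrix `A(h,u) = [[u + ωh₀ - ωh, h], [g, u + ωh₀]]` of the vorticity-modified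
shallow water equations with eigenvalues `λ± = u + ωh₀ - ωh/2 ± S(h)`; hence `R±` are
its Riemann invariants. -/
theorem shallow_water_riemann_invariants
    (g h₀ ω : ℝ) (hg : 0 < g) (hω : ω ≠ 0)
    (S : ℝ → ℝ) (hS : ∀ h : ℝ, S h = Real.sqrt (g * h + ω ^ 2 * h ^ 2 / 4))
    (Rp Rm : ℝ → ℝ → ℝ)
    (hRp : ∀ h u : ℝ, Rp h u
      = u - ω * h / 2 + (S h + g / ω * Real.log (2 * g + ω ^ 2 * h + 2 * ω * S h)))
    (hRm : ∀ h u : ℝ, Rm h u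
      = u - ω * h / 2 - (S h + g / ω * Real.log (2 * g + ω ^ 2 * h + 2 * ω * S h))) :
    ∀ h > (0 : ℝ), ∀ u : ℝ,
      (deriv (fun h' => Rp h' u) h = -ω / 2 + S h / h ∧
        deriv (fun u' => Rp h u') u = 1 ∧
        (-ω / 2 + S h / h) * (u + ω * h₀ - ω * h) + 1 * g
          = (u + ω * h₀ - ω * h / 2 + S h) * (-ω / 2 + S h / h) ∧
        (-ω / 2 + S h / h) * h + 1 * (u + ω * h₀)
          = (u + ω * h₀ - ω * h / 2 + S h) * 1) ∧
      (deriv (fun h' => Rm h' u) h = -ω / 2 - S h / h ∧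
        deriv (fun u' => Rm h u') u = 1 ∧
        (-ω / 2 - S h / h) * (u + ω * h₀ - ω * h) + 1 * g
          = (u + ω * h₀ - ω * h / 2 - S h) * (-ω / 2 - S h / h) ∧
        (-ω / 2 - S h / h) * h + 1 * (u + ω * h₀)
          = (u + ω * h₀ - ω * h / 2 - S h) * 1) := by
  intro h hh u
  have hsq : S h ^ 2 = g * h + ω ^ 2 * h ^ 2 / 4 := by
    rw [hS]; exact sq_sqrt (depth_poly_pos hg hh).le
  have hpot := hasDerivAt_riemann_potential hg hω hh
  simp only [← hS] at hpot
  have hlin : HasDerivAt (fun h' => u - ω * h' / 2) (-ω / 2) h := by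
    refine ((((hasDerivAt_id h).const_mul ω).div_const 2).const_sub u).congr_deriv ?_
    ring
  refine ⟨⟨?_, ?_, shallowWater_left_eigenvector u hh.ne' hsq⟩, ⟨?_, ?_, ?_⟩⟩
  · simp only [hRp]
    exact (hlin.add hpot).deriv
  · simp [hRp]
  · simp only [hRm]
    exact (hlin.sub hpot).deriv.trans (by ring)
  · simp [hRm]
  · simpa only [neg_div, ← sub_eq_add_neg] using
      shallowWater_left_eigenvector (h₀ := h₀) u hh.ne' (s := -S h) (by rw [neg_sq, hsq])
end

section
/- Fix g > 0, h > 0 and u ∈ ℝ, and for ω ≠ 0 set S(h) = √(g h + ω²h²/4) and R±(h,u;ω) = u − ωh/2 ± (S(h) + (g/ω)·log(2g + ω²h + 2ω S(h))). Then lim_{ω→0, ω≠0} (R₊(h,u;ω) − (g/ω)·log(2g)) = u + 2√(g h) and lim_{ω→0, ω≠0} (R₋(h,u;ω) + (g/ω)·log(2g)) = u − 2√(g h). That is, in the irrotational limit the Riemann invariants of the vorticity-modified shallow water equations tend (after removal of the constant (g/ω)·log(2g)) to the classical Riemann invariants u ± 2√(gh). -/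
/-!
With `G(ω) = 2g + ω²h + 2ωS(ω)`, the correction `(g/ω)(log G(ω) - log(2g))` is `g` times a
difference quotient of `log ∘ G` at `0`, hence tends to `g G'(0) / G(0) = g · 2√(gh) / (2g)`.
Every other term of `R±` is continuous in `ω`, so the limits are `u ± (√(gh) + √(gh))`.
-/

open Real Filter Topology

theorem hasDerivAt_of_eq_add_sub_mul {f φ : ℝ → ℝ} {x : ℝ} (hφ : ContinuousAt φ x)
    (hf : ∀ y, f y = f x + (y - x) * φ y) : HasDerivAt f (φ x) x := by
  rw [hasDerivAt_iff_tendsto_slope]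
  refine (hφ.tendsto.mono_left nhdsWithin_le_nhds).congr' ?_
  filter_upwards [self_mem_nhdsWithin] with y (hy : y ≠ x)
  rw [slope_def_field, hf y, add_sub_cancel_left, mul_div_cancel_left₀ _ (sub_ne_zero.2 hy)]

theorem tendsto_div_mul_log_sub_log_of_hasDerivAt {f : ℝ → ℝ} {f' : ℝ} (hf : HasDerivAt f f' 0)
    (hf0 : f 0 ≠ 0) (c : ℝ) :
    Tendsto (fun ω => c / ω * log (f ω) - c / ω * log (f 0)) (𝓝[≠] 0)
      (𝓝 (c * (f' / f 0))) := by
  have hslope := (hasDerivAt_iff_tendsto_slope.1 (hf.log hf0)).const_mul c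
  refine hslope.congr fun ω => ?_
  rw [slope_def_field, sub_zero]
  ring

/-- `2g + ω²h + 2ωs(ω) = 2g + ω(ωh + 2s(ω))`, so only continuity of `s` is needed to
differentiate it at `0`. -/
theorem tendsto_div_mul_log_vorticity_sub_log {g : ℝ} (hg : g ≠ 0) (h : ℝ) {s : ℝ → ℝ}
    (hs : ContinuousAt s 0) :
    Tendsto (fun ω => g / ω * log (2 * g + ω ^ 2 * h + 2 * ω * s ω) - g / ω * log (2 * g))
      (𝓝[≠] 0) (𝓝 (s 0)) := by
  set G : ℝ → ℝ := fun ω => 2 * g + ω ^ 2 * h + 2 * ω * s ω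
  have hG0 : G 0 = 2 * g := by simp [G]
  have hG : HasDerivAt G (2 * s 0) 0 := by
    have hφ : ContinuousAt (fun ω => ω * h + 2 * s ω) 0 := by fun_prop
    simpa using hasDerivAt_of_eq_add_sub_mul hφ fun ω => by simp only [G]; ring
  have hlim := tendsto_div_mul_log_sub_log_of_hasDerivAt hG (by rw [hG0]; positivity) g
  rw [hG0] at hlim
  convert hlim using 2
  field_simp

theorem riemann_invariants_irrotational_limit_general
    (g h u : ℝ) (hg : 0 < g)
    (S : ℝ → ℝ) (hS : ∀ ω : ℝ, S ω = Real.sqrt (g * h + ω ^ 2 * h ^ 2 / 4))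
    (Rp Rm : ℝ → ℝ)
    (hRp : ∀ ω : ℝ, Rp ω
      = u - ω * h / 2 + (S ω + g / ω * Real.log (2 * g + ω ^ 2 * h + 2 * ω * S ω)))
    (hRm : ∀ ω : ℝ, Rm ω
      = u - ω * h / 2 - (S ω + g / ω * Real.log (2 * g + ω ^ 2 * h + 2 * ω * S ω))) :
    Tendsto (fun ω : ℝ => Rp ω - g / ω * Real.log (2 * g)) (𝓝[≠] 0)
      (𝓝 (u + 2 * Real.sqrt (g * h))) ∧
    Tendsto (fun ω : ℝ => Rm ω + g / ω * Real.log (2 * g)) (𝓝[≠] 0)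
      (𝓝 (u - 2 * Real.sqrt (g * h))) := by
  have hScont : Continuous S := by rw [funext hS]; fun_prop
  have hS0 : S 0 = √(g * h) := by simp [hS]
  have hflow : Tendsto (fun ω : ℝ => u - ω * h / 2) (𝓝[≠] 0) (𝓝 u) :=
    tendsto_nhdsWithin_of_tendsto_nhds <| Continuous.tendsto' (by fun_prop) 0 u (by simp)
  have hSlim : Tendsto S (𝓝[≠] 0) (𝓝 √(g * h)) :=
    hS0 ▸ tendsto_nhdsWithin_of_tendsto_nhds (hScont.tendsto 0)
  have hlog := hS0 ▸ tendsto_div_mul_log_vorticity_sub_log hg.ne' h hScont.continuousAt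
  constructor
  · convert (hflow.add hSlim).add hlog using 1
    · ext ω; rw [hRp]; ring
    · ring_nf
  · convert (hflow.sub hSlim).sub hlog using 1
    · ext ω; rw [hRm]; ring
    · ring_nf

/-- In the irrotational limit `ω → 0`, the Riemann invariants of the vorticity-modified
shallow water equations tend, after removal of the constant `(g/ω)log(2g)`, to the
classical Riemann invariants `u ± 2√(gh)`. -/
theorem riemann_invariants_irrotational_limit
    (g h u : ℝ) (hg : 0 < g) (hh : 0 < h)
    (S : ℝ → ℝ) (hS : ∀ ω : ℝ, S ω = Real.sqrt (g * h + ω ^ 2 * h ^ 2 / 4))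
    (Rp Rm : ℝ → ℝ)
    (hRp : ∀ ω : ℝ, Rp ω
      = u - ω * h / 2 + (S ω + g / ω * Real.log (2 * g + ω ^ 2 * h + 2 * ω * S ω)))
    (hRm : ∀ ω : ℝ, Rm ω
      = u - ω * h / 2 - (S ω + g / ω * Real.log (2 * g + ω ^ 2 * h + 2 * ω * S ω))) :
    Tendsto (fun ω : ℝ => Rp ω - g / ω * Real.log (2 * g)) (𝓝[≠] 0)
      (𝓝 (u + 2 * Real.sqrt (g * h))) ∧
    Tendsto (fun ω : ℝ => Rm ω + g / ω * Real.log (2 * g)) (𝓝[≠] 0)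
      (𝓝 (u - 2 * Real.sqrt (g * h))) :=
  riemann_invariants_irrotational_limit_general g h u hg S hS Rp Rm hRp hRm
end

section
/- Let g, h₀ > 0 and ω ≠ 0. For h > 0 set S(h) = √(g h + ω²h²/4), U(h) = ωh/2 + S(h) + (g/ω)·log(2g + ω²h + 2ω S(h)), and Λ(h) = (ω h₀)/2 + 2S(h) + (g/ω)·log(2g + ω²h + 2ω S(h)) − S(h₀) − (g/ω)·log(2g + ω²h₀ + 2ω S(h₀)). Let f : ℝ → (0,∞) be continuously differentiable, let I ⊆ ℝ be an open interval, and suppose σ : ℝ × I → ℝ is differentiable and satisfies x = σ(x,t) + t·Λ(f(σ(x,t))) for all (x,t) ∈ ℝ × I. Then h(x,t) := f(σ(x,t)) and u(x,t) := U(f(σ(x,t))) − U(h₀) solve the vorticity-modified shallow water equations: ∂ₜh + ω h₀ ∂ₓh + ∂ₓ(u h) − ω h ∂ₓh = 0 and ∂ₜu + ω h₀ ∂ₓu + g ∂ₓh + u ∂ₓu = 0 at every point of ℝ × I. -/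
/-!
Along the characteristics the foot `σ` satisfies `σₜ = -Λ(h) σₓ`, so every function of
`h` is transported: `φ(h)ₜ = -Λ(h) φ(h)ₓ`. Since `Λ = ωh₀ + u + S(h) - ωh/2`, both equations
become `hₓ` times an expression in `h` alone, and these vanish because
`U'(h) = ω/2 + (4g + ω²h)/(4S(h))` satisfies `h U' = ωh/2 + S` and `U' (ωh/2 - S) = -g`.
-/

open Real Filter Topology

namespace ShallowWater

-- `swS`, `swU` are the `S`, `U` of the statement and `swD` the argument of its logarithm.
noncomputable def swS (g ω y : ℝ) : ℝ := √(g * y + ω ^ 2 * y ^ 2 / 4)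

noncomputable def swD (g ω y : ℝ) : ℝ := 2 * g + ω ^ 2 * y + 2 * ω * swS g ω y

noncomputable def swU (g ω y : ℝ) : ℝ := ω * y / 2 + swS g ω y + g / ω * log (swD g ω y)

variable {g ω b : ℝ}

lemma swS_pos (hg : 0 < g) (hb : 0 < b) : 0 < swS g ω b :=
  sqrt_pos.2 (by positivity)

lemma swS_mul_self (hg : 0 < g) (hb : 0 < b) :
    swS g ω b * swS g ω b = g * b + ω ^ 2 * b ^ 2 / 4 :=
  mul_self_sqrt (by positivity)

lemma swD_pos (hg : 0 < g) (hb : 0 < b) : 0 < swD g ω b := by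
  -- `D` times its conjugate is `4g²`, and the two factors have positive sum
  have hconj : swD g ω b * (2 * g + ω ^ 2 * b - 2 * ω * swS g ω b) = 4 * g ^ 2 := by
    unfold swD; linear_combination (-4 * ω ^ 2) * swS_mul_self (ω := ω) hg hb
  have hsum : 0 < swD g ω b + (2 * g + ω ^ 2 * b - 2 * ω * swS g ω b) := by
    unfold swD; ring_nf; positivity
  nlinarith [sq_pos_of_pos hg]

lemma hasDerivAt_swS (hg : 0 < g) (hb : 0 < b) :
    HasDerivAt (swS g ω) ((2 * g + ω ^ 2 * b) / (4 * swS g ω b)) b := by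
  have hP : HasDerivAt (fun y => g * y + ω ^ 2 * y ^ 2 / 4) (g + ω ^ 2 * b / 2) b := by
    refine (((hasDerivAt_id b).const_mul g).add
      (((hasDerivAt_pow 2 b).const_mul (ω ^ 2)).div_const 4)).congr_deriv ?_
    simp only [Nat.cast_ofNat]; ring
  have hS := swS_pos (ω := ω) hg hb
  refine (hP.sqrt (by positivity)).congr_deriv ?_
  unfold swS at hS ⊢
  field_simp
  ring

lemma hasDerivAt_log_swD (hg : 0 < g) (hω : ω ≠ 0) (hb : 0 < b) :
    HasDerivAt (fun y => log (swD g ω y)) (ω / (2 * swS g ω b)) b := by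
  have hS := swS_pos (ω := ω) hg hb
  have hD := swD_pos (ω := ω) hg hb
  refine (((((hasDerivAt_id b).const_mul (ω ^ 2)).const_add (2 * g)).add
    ((hasDerivAt_swS hg hb).const_mul (2 * ω))).log hD.ne').congr_deriv ?_
  change _ / swD g ω b = _
  rw [div_eq_div_iff hD.ne' (by positivity)]
  unfold swD
  field_simp
  ring

noncomputable def swU' (g ω b : ℝ) : ℝ := ω / 2 + (4 * g + ω ^ 2 * b) / (4 * swS g ω b)

lemma hasDerivAt_swU (hg : 0 < g) (hω : ω ≠ 0) (hb : 0 < b) :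
    HasDerivAt (swU g ω) (swU' g ω b) b := by
  have hS := swS_pos (ω := ω) hg hb
  refine ((((hasDerivAt_id b).const_mul ω).div_const 2).add (hasDerivAt_swS hg hb)
    |>.add ((hasDerivAt_log_swD hg hω hb).const_mul (g / ω))).congr_deriv ?_
  unfold swU'
  field_simp
  ring

lemma mul_swU' (hg : 0 < g) (hb : 0 < b) : b * swU' g ω b = ω * b / 2 + swS g ω b := by
  have hS := swS_pos (ω := ω) hg hb
  unfold swU'
  field_simp
  linear_combination (-8) * swS_mul_self (ω := ω) hg hb

lemma swU'_mul_add (hg : 0 < g) (hb : 0 < b) :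
    swU' g ω b * (ω * b / 2 - swS g ω b) + g = 0 := by
  have hS := swS_pos (ω := ω) hg hb
  unfold swU'
  field_simp
  linear_combination (-8 * ω) * swS_mul_self (ω := ω) hg hb

end ShallowWater

lemma exists_hasDerivAt_slices {F : ℝ → ℝ → ℝ} {x t : ℝ}
    (hF : DifferentiableAt ℝ (fun q : ℝ × ℝ => F q.1 q.2) (x, t)) :
    (∃ A, HasDerivAt (fun x' => F x' t) A x) ∧ ∃ B, HasDerivAt (fun t' => F x t') B t :=
  ⟨⟨_, (hF.comp (f := fun x' => (x', t)) x
      (differentiableAt_id.prodMk (differentiableAt_const t))).hasDerivAt⟩,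
    ⟨_, (hF.comp (f := fun t' => (x, t')) t
      ((differentiableAt_const x).prodMk differentiableAt_id)).hasDerivAt⟩⟩

section Characteristics

variable {σ : ℝ → ℝ → ℝ} {G : ℝ → ℝ} {x t A B : ℝ}

/-- Differentiating `x = σ(x,t) + t G(σ(x,t))` in `x` and in `t` gives
`σₓ (1 + t G') = 1` and `σₜ (1 + t G') = -G`. -/
lemma foot_deriv_time_eq (hA : HasDerivAt (fun x' => σ x' t) A x)
    (hB : HasDerivAt (fun t' => σ x t') B t) (hG : DifferentiableAt ℝ G (σ x t))
    (hx : ∀ x', σ x' t + t * G (σ x' t) = x')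
    (ht : ∀ᶠ t' in 𝓝 t, σ x t' + t' * G (σ x t') = x) :
    B = -G (σ x t) * A := by
  obtain ⟨G', hG'⟩ : ∃ G', HasDerivAt G G' (σ x t) := ⟨_, hG.hasDerivAt⟩
  have e1 : A + t * (G' * A) = 1 :=
    (hA.fun_add ((hG'.comp x hA).const_mul t)).unique
      ((hasDerivAt_id x).congr_of_eventuallyEq (Eventually.of_forall hx))
  have e2 : B + (1 * G (σ x t) + t * (G' * B)) = 0 :=
    (hB.fun_add ((hasDerivAt_id' t).fun_mul (hG'.comp t hB))).unique
      ((hasDerivAt_const t x).congr_of_eventuallyEq ht)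
  linear_combination A * e2 - B * e1

end Characteristics

open ShallowWater in
theorem simple_wave_solves_shallow_water_general
    (g h₀ ω : ℝ) (hg : 0 < g) (hω : ω ≠ 0)
    (S U Lam : ℝ → ℝ)
    (hS : ∀ h : ℝ, S h = Real.sqrt (g * h + ω ^ 2 * h ^ 2 / 4))
    (hU : ∀ h : ℝ, U h
      = ω * h / 2 + S h + g / ω * Real.log (2 * g + ω ^ 2 * h + 2 * ω * S h))
    (hLam : ∀ h : ℝ, Lam h
      = ω * h₀ / 2 + 2 * S h + g / ω * Real.log (2 * g + ω ^ 2 * h + 2 * ω * S h)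
        - S h₀ - g / ω * Real.log (2 * g + ω ^ 2 * h₀ + 2 * ω * S h₀))
    (f : ℝ → ℝ) (hf : ContDiff ℝ 1 f) (hfpos : ∀ s : ℝ, 0 < f s)
    (I : Set ℝ) (hIopen : IsOpen I)
    (σ : ℝ → ℝ → ℝ)
    (hσdiff : DifferentiableOn ℝ (fun q : ℝ × ℝ => σ q.1 q.2) (Set.univ ×ˢ I))
    (hσ : ∀ x : ℝ, ∀ t ∈ I, x = σ x t + t * Lam (f (σ x t)))
    (h u : ℝ → ℝ → ℝ)
    (hh : ∀ x t : ℝ, h x t = f (σ x t))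
    (hu : ∀ x t : ℝ, u x t = U (f (σ x t)) - U h₀) :
    ∀ x : ℝ, ∀ t ∈ I,
      (deriv (fun t' => h x t') t + ω * h₀ * deriv (fun x' => h x' t) x
        + deriv (fun x' => u x' t * h x' t) x
        - ω * h x t * deriv (fun x' => h x' t) x = 0) ∧
      (deriv (fun t' => u x t') t + ω * h₀ * deriv (fun x' => u x' t) x
        + g * deriv (fun x' => h x' t) x + u x t * deriv (fun x' => u x' t) x = 0) := by
  intro x t ht
  obtain rfl : S = swS g ω := funext hS
  obtain rfl : U = swU g ω := funext hU
  have hLamU : Lam = fun y => ω * h₀ + (swU g ω y - swU g ω h₀) + swS g ω y - ω * y / 2 :=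
    funext fun y => by rw [hLam]; unfold swU swD; ring
  obtain ⟨⟨A, hA⟩, B, hB⟩ := exists_hasDerivAt_slices
    (hσdiff.differentiableAt ((isOpen_univ.prod hIopen).mem_nhds ⟨trivial, ht⟩))
  obtain ⟨F', hf'⟩ : ∃ F', HasDerivAt f F' (σ x t) :=
    ⟨_, (hf.differentiable one_ne_zero (σ x t)).hasDerivAt⟩
  have hb := hfpos (σ x t)
  have hU' := hasDerivAt_swU hg hω hb
  have hLamd : DifferentiableAt ℝ Lam (f (σ x t)) := by
    have := hU'.differentiableAt
    have := (hasDerivAt_swS (ω := ω) hg hb).differentiableAt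
    rw [hLamU]; fun_prop
  have hBA : B = -Lam (f (σ x t)) * A := foot_deriv_time_eq (G := Lam ∘ f) hA hB
    (hLamd.comp _ hf'.differentiableAt) (fun x' => (hσ x' t ht).symm)
    (eventually_of_mem (hIopen.mem_nhds ht) fun t' ht' => (hσ x t' ht').symm)
  have hhx : HasDerivAt (fun x' => h x' t) (F' * A) x := by simp only [hh]; exact hf'.comp x hA
  have hht : HasDerivAt (fun t' => h x t') (F' * B) t := by simp only [hh]; exact hf'.comp t hB
  have hux : HasDerivAt (fun x' => u x' t) (swU' g ω (f (σ x t)) * F' * A) x := by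
    simp only [hu]; exact ((hU'.comp _ hf').comp x hA).sub_const _
  have hut : HasDerivAt (fun t' => u x t') (swU' g ω (f (σ x t)) * F' * B) t := by
    simp only [hu]; exact ((hU'.comp _ hf').comp t hB).sub_const _
  rw [hht.deriv, hhx.deriv, (hux.fun_mul hhx).deriv, hut.deriv, hux.deriv, hh, hu, hBA, hLamU]
  constructor
  · linear_combination (F' * A) * mul_swU' (ω := ω) hg hb
  · linear_combination (F' * A) * swU'_mul_add (ω := ω) hg hb

/-- A simple wave constructed by the method of characteristics solves the
vorticity-modified shallow water equations: if the characteristic foot `σ(x,t)` is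
differentiable and satisfies `x = σ(x,t) + t·Λ(f(σ(x,t)))`, then
`h(x,t) = f(σ(x,t))`, `u(x,t) = U(f(σ(x,t))) - U(h₀)` solve
`hₜ + ωh₀hₓ + (uh)ₓ - ωhhₓ = 0`, `uₜ + ωh₀uₓ + ghₓ + uuₓ = 0` on `ℝ × I`. -/
theorem simple_wave_solves_shallow_water
    (g h₀ ω : ℝ) (hg : 0 < g) (hh₀ : 0 < h₀) (hω : ω ≠ 0)
    (S U Lam : ℝ → ℝ)
    (hS : ∀ h : ℝ, S h = Real.sqrt (g * h + ω ^ 2 * h ^ 2 / 4))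
    (hU : ∀ h : ℝ, U h
      = ω * h / 2 + S h + g / ω * Real.log (2 * g + ω ^ 2 * h + 2 * ω * S h))
    (hLam : ∀ h : ℝ, Lam h
      = ω * h₀ / 2 + 2 * S h + g / ω * Real.log (2 * g + ω ^ 2 * h + 2 * ω * S h)
        - S h₀ - g / ω * Real.log (2 * g + ω ^ 2 * h₀ + 2 * ω * S h₀))
    (f : ℝ → ℝ) (hf : ContDiff ℝ 1 f) (hfpos : ∀ s : ℝ, 0 < f s)
    (I : Set ℝ) (hIopen : IsOpen I) (hIord : I.OrdConnected)
    (σ : ℝ → ℝ → ℝ)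
    (hσdiff : DifferentiableOn ℝ (fun q : ℝ × ℝ => σ q.1 q.2) (Set.univ ×ˢ I))
    (hσ : ∀ x : ℝ, ∀ t ∈ I, x = σ x t + t * Lam (f (σ x t)))
    (h u : ℝ → ℝ → ℝ)
    (hh : ∀ x t : ℝ, h x t = f (σ x t))
    (hu : ∀ x t : ℝ, u x t = U (f (σ x t)) - U h₀) :
    ∀ x : ℝ, ∀ t ∈ I,
      (deriv (fun t' => h x t') t + ω * h₀ * deriv (fun x' => h x' t) x
        + deriv (fun x' => u x' t * h x' t) x
        - ω * h x t * deriv (fun x' => h x' t) x = 0) ∧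
      (deriv (fun t' => u x t') t + ω * h₀ * deriv (fun x' => u x' t) x
        + g * deriv (fun x' => h x' t) x + u x t * deriv (fun x' => u x' t) x = 0) :=
  simple_wave_solves_shallow_water_general g h₀ ω hg hω S U Lam hS hU hLam f hf hfpos I hIopen σ
    hσdiff hσ h u hh hu
end

section
/- Let g > 0, ω ≠ 0, and let f : ℝ → (0,∞) be continuously differentiable with f′(s₀) < 0 for some s₀. For any constant c₀ ∈ ℝ define X(t,s) = s + t·(c₀ + 2√(g f(s) + ω²f(s)²/4) + (g/ω)·log(2g + ω²f(s) + 2ω√(g f(s) + ω²f(s)²/4))). Then ∂X/∂s (t,s) = 1 + t·f′(s)·(3g + ω²f(s))/(2√(g f(s) + ω²f(s)²/4)) for all t, s. Moreover, setting t* = inf over {s : f′(s) < 0} of 2√(g f(s) + ω²f(s)²/4)/(−f′(s)·(3g + ω²f(s))), one has ∂X/∂s (t,s) > 0 for every s ∈ ℝ and every t with 0 ≤ t < t*, and ∂X/∂s(t₀,s₀) = 0 at t₀ = 2√(g f(s₀) + ω²f(s₀)²/4)/(−f′(s₀)·(3g + ω²f(s₀))). -/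
open Real

/-!
Along the simple wave the characteristic speed is a function `λ(h)` of the depth alone, so
`X(t,s) = s + t λ(f s)` and `∂X/∂s = 1 + t λ'(f s) f'(s)`. Writing `c = √(gh + ω²h²/4)` and
`A = 2g + ω²h + 2ωc`, one has `A' = ωA/(2c)`, so the logarithmic term contributes `g/(2c)` and
`λ' = (3g + ω²h)/(2c) > 0`. Hence `∂X/∂s` can only vanish where `f' < 0`, namely at
`t = 2c/(-f'(3g + ω²h))`, and stays positive before the infimum of these times.
-/

namespace SimpleWave

variable {g ω : ℝ}

noncomputable def celerity (g ω h : ℝ) : ℝ := √(g * h + ω ^ 2 * h ^ 2 / 4)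

noncomputable def characteristicSpeed (g ω c₀ h : ℝ) : ℝ :=
  c₀ + 2 * celerity g ω h + g / ω * log (2 * g + ω ^ 2 * h + 2 * ω * celerity g ω h)

lemma hasDerivAt_celerity {h : ℝ} (hQ : 0 < g * h + ω ^ 2 * h ^ 2 / 4) :
    HasDerivAt (celerity g ω) ((g + ω ^ 2 * h / 2) / (2 * celerity g ω h)) h := by
  have hpoly : HasDerivAt (fun h => g * h + ω ^ 2 * h ^ 2 / 4) (g + ω ^ 2 * h / 2) h := by
    refine (((hasDerivAt_id' h).const_mul g).fun_add
      (((hasDerivAt_pow 2 h).const_mul (ω ^ 2)).div_const 4)).congr_deriv ?_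
    ring
  exact hpoly.sqrt hQ.ne'

lemma hasDerivAt_log_celerity (hg : g ≠ 0) {h : ℝ} (hQ : 0 < g * h + ω ^ 2 * h ^ 2 / 4) :
    HasDerivAt (fun h => log (2 * g + ω ^ 2 * h + 2 * ω * celerity g ω h))
      (ω / (2 * celerity g ω h)) h := by
  have hc : celerity g ω h ≠ 0 := (sqrt_pos.mpr hQ).ne'
  have hc_sq : celerity g ω h ^ 2 = g * h + ω ^ 2 * h ^ 2 / 4 := sq_sqrt hQ.le
  -- `A` times its conjugate `2g + ω²h - 2ωc` is `4g²`.
  have hA : 2 * g + ω ^ 2 * h + 2 * ω * celerity g ω h ≠ 0 := by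
    intro hA
    have : (2 * g + ω ^ 2 * h + 2 * ω * celerity g ω h)
        * (2 * g + ω ^ 2 * h - 2 * ω * celerity g ω h) = 4 * g ^ 2 := by
      linear_combination (-4 * ω ^ 2) * hc_sq
    rw [hA, zero_mul] at this
    exact hg (by nlinarith)
  refine (((((hasDerivAt_id' h).const_mul (ω ^ 2)).const_add (2 * g)).fun_add
    ((hasDerivAt_celerity hQ).const_mul (2 * ω))).log hA).congr_deriv ?_
  rw [div_eq_iff hA]
  field_simp
  ring

lemma hasDerivAt_characteristicSpeed (hg : g ≠ 0) (hω : ω ≠ 0) (c₀ : ℝ) {h : ℝ}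
    (hQ : 0 < g * h + ω ^ 2 * h ^ 2 / 4) :
    HasDerivAt (characteristicSpeed g ω c₀) ((3 * g + ω ^ 2 * h) / (2 * celerity g ω h)) h := by
  have hc : celerity g ω h ≠ 0 := (sqrt_pos.mpr hQ).ne'
  refine ((((hasDerivAt_celerity hQ).const_mul 2).const_add c₀).fun_add
    ((hasDerivAt_log_celerity hg hQ).const_mul (g / ω))).congr_deriv ?_
  field_simp
  ring

lemma hasDerivAt_characteristic (hg : g ≠ 0) (hω : ω ≠ 0) (c₀ t : ℝ) {f : ℝ → ℝ} {f' s : ℝ}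
    (hf : HasDerivAt f f' s) (hQ : 0 < g * f s + ω ^ 2 * f s ^ 2 / 4) :
    HasDerivAt (fun s => s + t * characteristicSpeed g ω c₀ (f s))
      (1 + t * f' * (3 * g + ω ^ 2 * f s) / (2 * celerity g ω (f s))) s := by
  refine ((hasDerivAt_id' s).fun_add
    (((hasDerivAt_characteristicSpeed hg hω c₀ hQ).comp s hf).const_mul t)).congr_deriv ?_
  ring

end SimpleWave

lemma one_add_mul_div_pos_of_lt_sInf {α : Type*} {d e r : α → ℝ} (he : ∀ s, 0 < e s)
    (hr : ∀ s, 0 < r s) {t : ℝ} (ht : 0 ≤ t)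
    (htlt : t < sInf ((fun s => r s / (-d s * e s)) '' {s | d s < 0})) (s : α) :
    0 < 1 + t * d s * e s / r s := by
  rcases le_or_gt 0 (d s) with hd | hd
  · have := hr s
    have := he s
    positivity
  have hbdd : BddBelow ((fun s => r s / (-d s * e s)) '' {s | d s < 0}) := by
    refine ⟨0, ?_⟩
    rintro _ ⟨u, hu, rfl⟩
    exact div_nonneg (hr u).le (mul_nonneg (neg_nonneg.mpr (hu.le)) (he u).le)
  have hts : t < r s / (-d s * e s) := htlt.trans_le (csInf_le hbdd ⟨s, hd, rfl⟩)
  have hde : 0 < -d s * e s := mul_pos (neg_pos.mpr hd) (he s)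
  rw [lt_div_iff₀ hde] at hts
  have : -(t * d s * e s / r s) < 1 := by
    rw [neg_div', div_lt_one (hr s)]
    linarith
  linarith

lemma one_add_mul_div_eq_zero_of_eq_div {d e r t : ℝ} (hd : d ≠ 0) (he : e ≠ 0) (hr : r ≠ 0)
    (ht : t = r / (-d * e)) : 1 + t * d * e / r = 0 := by
  subst ht
  field_simp
  ring

/-- The characteristic map `X(t,s)` of a simple wave of the vorticity-modified shallow
water equations satisfies `∂X/∂s = 1 + t f′(s)(3g + ω²f(s))/(2√(gf(s) + ω²f(s)²/4))`;
this is positive for `0 ≤ t < t*`, where `t*` is the breaking time, and vanishes at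
`(t₀, s₀)`. -/
theorem characteristic_map_derivative_and_breaking_time
    (g ω c₀ : ℝ) (hg : 0 < g) (hω : ω ≠ 0)
    (f : ℝ → ℝ) (hf : ContDiff ℝ 1 f) (hfpos : ∀ s : ℝ, 0 < f s)
    (s₀ : ℝ) (hs₀ : deriv f s₀ < 0)
    (X : ℝ → ℝ → ℝ)
    (hX : ∀ t s : ℝ, X t s
      = s + t * (c₀ + 2 * Real.sqrt (g * f s + ω ^ 2 * f s ^ 2 / 4)
        + g / ω * Real.log (2 * g + ω ^ 2 * f s
          + 2 * ω * Real.sqrt (g * f s + ω ^ 2 * f s ^ 2 / 4))))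
    (tstar : ℝ)
    (htstar : tstar = sInf ((fun s => 2 * Real.sqrt (g * f s + ω ^ 2 * f s ^ 2 / 4)
      / (-(deriv f s) * (3 * g + ω ^ 2 * f s))) '' {s : ℝ | deriv f s < 0}))
    (t₀ : ℝ)
    (ht₀ : t₀ = 2 * Real.sqrt (g * f s₀ + ω ^ 2 * f s₀ ^ 2 / 4)
      / (-(deriv f s₀) * (3 * g + ω ^ 2 * f s₀))) :
    (∀ t s : ℝ, deriv (fun s' => X t s') s
      = 1 + t * deriv f s * (3 * g + ω ^ 2 * f s)
        / (2 * Real.sqrt (g * f s + ω ^ 2 * f s ^ 2 / 4))) ∧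
    (∀ s : ℝ, ∀ t : ℝ, 0 ≤ t → t < tstar → 0 < deriv (fun s' => X t s') s) ∧
    deriv (fun s' => X t₀ s') s₀ = 0 := by
  have hQ (s : ℝ) : 0 < g * f s + ω ^ 2 * f s ^ 2 / 4 := by
    have := hfpos s
    positivity
  have hE (s : ℝ) : 0 < 3 * g + ω ^ 2 * f s := by
    have := hfpos s
    positivity
  have hc (s : ℝ) : 0 < 2 * √(g * f s + ω ^ 2 * f s ^ 2 / 4) :=
    mul_pos two_pos (sqrt_pos.mpr (hQ s))
  have hderiv (t s : ℝ) : deriv (fun s' => X t s') s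
      = 1 + t * deriv f s * (3 * g + ω ^ 2 * f s)
        / (2 * √(g * f s + ω ^ 2 * f s ^ 2 / 4)) := by
    rw [show (fun s' => X t s') = fun s' => s' + t * SimpleWave.characteristicSpeed g ω c₀ (f s')
      from funext (hX t)]
    exact (SimpleWave.hasDerivAt_characteristic hg.ne' hω c₀ t
      (hf.differentiable one_ne_zero s).hasDerivAt (hQ s)).deriv
  refine ⟨hderiv, fun s t ht htlt => ?_, ?_⟩
  · rw [hderiv]
    exact one_add_mul_div_pos_of_lt_sInf hE hc ht (htstar ▸ htlt) s
  · rw [hderiv]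
    exact one_add_mul_div_eq_zero_of_eq_div hs₀.ne (hE s₀).ne' (hc s₀).ne' ht₀
end

section
/- Let g > 0 and let f : ℝ → (0,∞) be continuously differentiable with f′(s₀) < 0 for some s₀. For ω ≠ 0 define the breaking time t*(ω) = inf over {s : f′(s) < 0} of 2√(g f(s) + ω²f(s)²/4)/(−f′(s)·(3g + ω²f(s))). Then t*(ω) ≥ 0 for all ω, and t*(ω) → 0 both as ω → +∞ and as ω → −∞. In particular, for every t > 0 there exists Ω > 0 such that t*(ω) < t whenever |ω| > Ω: the breaking time of a simple wave of the vorticity-modified shallow water equations decreases to zero as the size of the constant vorticity increases. -/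
open Real Filter Topology
set_option maxHeartbeats 1000000
set_option maxHeartbeats 1000000

lemma aux_tendsto (g a d : ℝ) (hg : 0 < g) (ha : 0 < a) (hd : 0 < d) :
    Tendsto (fun ω : ℝ => 2 * Real.sqrt (g * a + ω ^ 2 * a ^ 2 / 4)
      / (d * (3 * g + ω ^ 2 * a))) atTop (𝓝 0) := by
  have hB : Tendsto (fun r : ℝ => (2 * Real.sqrt (g * a) + r * a) / (d * a * r ^ 2))
      atTop (𝓝 0) := by
    have h1 : Tendsto (fun r : ℝ => (2 * Real.sqrt (g * a)) / (d * a) * (r ^ 2)⁻¹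
        + (1 / d) * r⁻¹) atTop (𝓝 0) := by
      have hp : Tendsto (fun r : ℝ => (r ^ 2)⁻¹) atTop (𝓝 0) :=
        (tendsto_pow_atTop two_ne_zero).inv_tendsto_atTop
      have hq : Tendsto (fun r : ℝ => r⁻¹) atTop (𝓝 (0:ℝ)) := tendsto_inv_atTop_zero
      have := (hp.const_mul ((2 * Real.sqrt (g * a)) / (d * a))).add
        (hq.const_mul (1 / d))
      simpa using this
    refine h1.congr' ?_
    filter_upwards [eventually_gt_atTop (0:ℝ)] with r hr
    have hr0 : r ≠ 0 := ne_of_gt hr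
    have hd0 : d ≠ 0 := ne_of_gt hd
    have ha0 : a ≠ 0 := ne_of_gt ha
    set c := Real.sqrt (g * a) with hc
    field_simp
  refine squeeze_zero' ?_ ?_ hB
  · filter_upwards with r
    positivity
  · filter_upwards [eventually_gt_atTop (0:ℝ)] with r hr
    have hnum : 2 * Real.sqrt (g * a + r ^ 2 * a ^ 2 / 4)
        ≤ 2 * Real.sqrt (g * a) + r * a := by
      have h2 : Real.sqrt (g * a + r ^ 2 * a ^ 2 / 4)
          ≤ Real.sqrt ((Real.sqrt (g * a) + r * a / 2) ^ 2) := by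
        apply Real.sqrt_le_sqrt
        have hs := Real.sq_sqrt (show (0:ℝ) ≤ g * a by positivity)
        nlinarith [Real.sqrt_nonneg (g * a), mul_nonneg (Real.sqrt_nonneg (g * a)) (show (0:ℝ) ≤ r * a / 2 by positivity)]
      rw [Real.sqrt_sq (by positivity)] at h2
      linarith
    have hden : d * a * r ^ 2 ≤ d * (3 * g + r ^ 2 * a) := by nlinarith
    exact div_le_div₀ (by positivity) hnum (by positivity) hden

/-- The breaking time `t*(ω)` of a simple wave of the vorticity-modified shallow water
equations is nonnegative and decreases to zero as the size of the constant vorticity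
increases: `t*(ω) → 0` as `ω → ±∞`, and for every `t > 0` one has `t*(ω) < t` whenever
`|ω|` is sufficiently large. -/
theorem breaking_time_vanishes_for_large_vorticity
    (g : ℝ) (hg : 0 < g)
    (f : ℝ → ℝ) (hf : ContDiff ℝ 1 f) (hfpos : ∀ s : ℝ, 0 < f s)
    (s₀ : ℝ) (hs₀ : deriv f s₀ < 0)
    (tstar : ℝ → ℝ)
    (htstar : ∀ ω : ℝ, tstar ω
      = sInf ((fun s => 2 * Real.sqrt (g * f s + ω ^ 2 * f s ^ 2 / 4)
        / (-(deriv f s) * (3 * g + ω ^ 2 * f s))) '' {s : ℝ | deriv f s < 0})) :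
    (∀ ω : ℝ, 0 ≤ tstar ω) ∧
    Tendsto tstar atTop (𝓝 0) ∧
    Tendsto tstar atBot (𝓝 0) ∧
    ∀ t > (0 : ℝ), ∃ Ω > (0 : ℝ), ∀ ω : ℝ, Ω < |ω| → tstar ω < t := by

  set S : Set ℝ := {s : ℝ | deriv f s < 0} with hS
  have hSne : S.Nonempty := ⟨s₀, hs₀⟩
  -- every element of the image set is nonnegative
  have hmem_nonneg : ∀ ω : ℝ, ∀ x ∈ ((fun s => 2 * Real.sqrt (g * f s + ω ^ 2 * f s ^ 2 / 4)
      / (-(deriv f s) * (3 * g + ω ^ 2 * f s))) '' S), 0 ≤ x := by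
    rintro ω x ⟨s, hs, rfl⟩
    have hs' : deriv f s < 0 := hs
    have h1 : 0 ≤ -(deriv f s) := by linarith
    have h2 : 0 ≤ 3 * g + ω ^ 2 * f s := by
      have := (hfpos s).le
      positivity
    exact div_nonneg (by positivity) (mul_nonneg h1 h2)
  have hnonneg : ∀ ω : ℝ, 0 ≤ tstar ω := by
    intro ω
    rw [htstar ω]
    exact Real.sInf_nonneg (hmem_nonneg ω)
  -- upper bound via the point s₀
  set a : ℝ := f s₀ with ha'
  set d : ℝ := -(deriv f s₀) with hd'
  have ha : 0 < a := hfpos s₀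
  have hd : 0 < d := by simp only [hd']; linarith
  set G : ℝ → ℝ := fun ω => 2 * Real.sqrt (g * a + ω ^ 2 * a ^ 2 / 4)
      / (d * (3 * g + ω ^ 2 * a)) with hG
  have hub : ∀ ω : ℝ, tstar ω ≤ G ω := by
    intro ω
    rw [htstar ω]
    exact csInf_le ⟨0, fun x hx => hmem_nonneg ω x hx⟩ ⟨s₀, hs₀, rfl⟩
  have hGtop : Tendsto G atTop (𝓝 0) := aux_tendsto g a d hg ha hd
  have hGbot : Tendsto G atBot (𝓝 0) := by
    have := hGtop.comp tendsto_neg_atBot_atTop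
    refine this.congr fun ω => ?_
    simp only [hG, Function.comp_apply, even_two.neg_pow]
  have htop : Tendsto tstar atTop (𝓝 0) :=
    squeeze_zero' (Eventually.of_forall hnonneg) (Eventually.of_forall hub) hGtop
  have hbot : Tendsto tstar atBot (𝓝 0) :=
    squeeze_zero' (Eventually.of_forall hnonneg) (Eventually.of_forall hub) hGbot
  refine ⟨hnonneg, htop, hbot, ?_⟩
  intro t ht
  have h1 : ∀ᶠ ω in atTop, tstar ω < t := htop.eventually (eventually_lt_nhds ht)
  have h2 : ∀ᶠ ω in atBot, tstar ω < t := hbot.eventually (eventually_lt_nhds ht)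
  obtain ⟨A, hA⟩ := eventually_atTop.mp h1
  obtain ⟨B, hB⟩ := eventually_atBot.mp h2
  refine ⟨max (max A (-B)) 1, lt_of_lt_of_le one_pos (le_max_right _ _), fun ω hω => ?_⟩
  rcases lt_abs.mp hω with h | h
  · exact hA ω (le_of_lt (lt_of_le_of_lt (le_trans (le_max_left A (-B)) (le_max_left _ 1)) h))
  · have : ω ≤ B := by
      have h' : -B ≤ max (max A (-B)) 1 := le_trans (le_max_right A (-B)) (le_max_left _ 1)
      linarith
    exact hB ω this
end

section
/- Fix ω ∈ ℝ and (normalizing g = h₀ = 1) let c(k) = (ω/2)·tanh(k)/k + √(tanh(k)/k + (ω²/4)·(tanh(k)/k)²) for k > 0. Then c is strictly positive and strictly decreasing on (0,∞). Consequently, for every k > 0, c(k)² − c(2k)² > 0; in particular the second-harmonic resonance index i₃(k) = c²(k) − c²(2k) of the full-dispersion shallow water equations never vanishes, for any constant vorticity ω. -/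
/-!
Writing `t = tanh k / k`, the phase speed is the larger root of `c² - ω t c - t = 0`, which for
`t > 0` equals `1 / (√(1/t + ω²/4) - ω/2)`. The denominator is positive and decreasing in `t`, so
`c` is positive and increasing in `t`; and `t = tanh k / k` is strictly decreasing in `k`, because
its derivative has the sign of `k - sinh k cosh k = k - sinh (2k) / 2 < 0`. Hence `c` is strictly
decreasing in `k`, and `c (2k) < c k` with both positive gives `c (2k)² < c k²`.
-/

open Real

namespace Real

theorem hasDerivAt_tanh_s17 (x : ℝ) : HasDerivAt tanh (cosh x ^ 2)⁻¹ x := by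
  have h := (hasDerivAt_sinh x).div (hasDerivAt_cosh x) (cosh_pos x).ne'
  rw [show sinh / cosh = tanh from funext fun y ↦ (tanh_eq_sinh_div_cosh y).symm] at h
  refine h.congr_deriv ?_
  rw [inv_eq_one_div, ← cosh_sq_sub_sinh_sq x]
  ring

theorem continuous_tanh : Continuous tanh :=
  continuous_iff_continuousAt.2 fun x ↦ (hasDerivAt_tanh_s17 x).continuousAt

theorem tanh_pos {x : ℝ} (hx : 0 < x) : 0 < tanh x := by
  rw [tanh_eq_sinh_div_cosh]
  exact div_pos (sinh_pos_iff.2 hx) (cosh_pos x)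

theorem div_cosh_sq_lt_tanh {x : ℝ} (hx : 0 < x) : x / cosh x ^ 2 < tanh x := by
  have h2x : 2 * x < 2 * sinh x * cosh x := sinh_two_mul x ▸ self_lt_sinh_iff.2 (by linarith)
  rw [tanh_eq_sinh_div_cosh, div_lt_div_iff₀ (by positivity) (cosh_pos x)]
  nlinarith [cosh_pos x]

theorem strictAntiOn_tanh_div_self : StrictAntiOn (fun x ↦ tanh x / x) (Set.Ioi 0) := by
  refine strictAntiOn_of_deriv_neg (convex_Ioi 0)
    (continuous_tanh.continuousOn.div continuousOn_id fun x hx ↦ (ne_of_gt hx)) fun x hx ↦ ?_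
  replace hx : 0 < x := by rwa [interior_Ioi] at hx
  have hderiv : HasDerivAt (fun x ↦ tanh x / x) _ x :=
    (hasDerivAt_tanh_s17 x).div (hasDerivAt_id' x) hx.ne'
  rw [hderiv.deriv]
  refine div_neg_of_neg_of_pos ?_ (by positivity)
  have := div_cosh_sq_lt_tanh hx
  rw [div_eq_inv_mul] at this
  linarith

end Real

/-- The larger root of `(c - ω t / 2) ^ 2 = t + ω ^ 2 t ^ 2 / 4`: the phase speed at wavenumber `k`
is its value at `t = tanh k / k`. -/
noncomputable def shearPhaseSpeed (ω t : ℝ) : ℝ := ω / 2 * t + √(t + ω ^ 2 / 4 * t ^ 2)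

theorem half_lt_sqrt_inv_add {ω t : ℝ} (ht : 0 < t) : ω / 2 < √(t⁻¹ + ω ^ 2 / 4) := by
  refine (le_abs_self _).trans_lt ?_
  rw [← sqrt_sq_eq_abs]
  exact sqrt_lt_sqrt (sq_nonneg _) (by linarith [inv_pos.2 ht])

theorem shearPhaseSpeed_eq_inv {ω t : ℝ} (ht : 0 < t) :
    shearPhaseSpeed ω t = (√(t⁻¹ + ω ^ 2 / 4) - ω / 2)⁻¹ := by
  have hs : √(t⁻¹ + ω ^ 2 / 4) ^ 2 = t⁻¹ + ω ^ 2 / 4 := sq_sqrt (by positivity)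
  have hroot : √(t + ω ^ 2 / 4 * t ^ 2) = t * √(t⁻¹ + ω ^ 2 / 4) := by
    rw [← sqrt_sq (by positivity : 0 ≤ t * √(t⁻¹ + ω ^ 2 / 4)), mul_pow, hs]
    congr 1
    field_simp
  rw [shearPhaseSpeed, hroot]
  refine eq_inv_of_mul_eq_one_left ?_
  linear_combination t * hs + mul_inv_cancel₀ ht.ne'

theorem shearPhaseSpeed_pos (ω : ℝ) {t : ℝ} (ht : 0 < t) : 0 < shearPhaseSpeed ω t := by
  rw [shearPhaseSpeed_eq_inv ht]
  exact inv_pos.2 (sub_pos.2 (half_lt_sqrt_inv_add ht))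

theorem strictMonoOn_shearPhaseSpeed (ω : ℝ) : StrictMonoOn (shearPhaseSpeed ω) (Set.Ioi 0) := by
  intro s (hs : 0 < s) t (ht : 0 < t) hst
  rw [shearPhaseSpeed_eq_inv hs, shearPhaseSpeed_eq_inv ht]
  refine inv_strictAntiOn (sub_pos.2 (half_lt_sqrt_inv_add ht))
    (sub_pos.2 (half_lt_sqrt_inv_add hs)) ?_
  have := sqrt_lt_sqrt (by positivity) (add_lt_add_left (inv_strictAntiOn hs ht hst) (ω ^ 2 / 4))
  linarith

/-- With `g = h₀ = 1`, the phase speed `c(k)` of linear water waves with constant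
vorticity `ω` is strictly positive and strictly decreasing on `(0,∞)`; consequently the
second-harmonic resonance index `i₃(k) = c²(k) - c²(2k)` of the full-dispersion shallow
water equations never vanishes, for any constant vorticity. -/
theorem second_harmonic_resonance_never_occurs
    (ω : ℝ)
    (c : ℝ → ℝ)
    (hc : ∀ k : ℝ, c k = ω / 2 * (Real.tanh k / k)
      + Real.sqrt (Real.tanh k / k + ω ^ 2 / 4 * (Real.tanh k / k) ^ 2)) :
    (∀ k > (0 : ℝ), 0 < c k) ∧
    StrictAntiOn c (Set.Ioi 0) ∧
    ∀ k > (0 : ℝ), c k ^ 2 - c (2 * k) ^ 2 > 0 := by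
  obtain rfl : c = shearPhaseSpeed ω ∘ fun k ↦ tanh k / k := funext hc
  have hsymbol_pos : ∀ k > (0 : ℝ), 0 < tanh k / k := fun k hk ↦ div_pos (tanh_pos hk) hk
  have hpos : ∀ k > (0 : ℝ), 0 < (shearPhaseSpeed ω ∘ fun k ↦ tanh k / k) k :=
    fun k hk ↦ shearPhaseSpeed_pos ω (hsymbol_pos k hk)
  have hanti := (strictMonoOn_shearPhaseSpeed ω).comp_strictAntiOn strictAntiOn_tanh_div_self
    hsymbol_pos
  refine ⟨hpos, hanti, fun k hk ↦ sub_pos.2 ?_⟩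
  have h2k : (0 : ℝ) < 2 * k := by linarith
  exact pow_lt_pow_left₀ (hanti hk h2k (by linarith)) (hpos _ h2k).le two_ne_zero
end
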